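/- arXiv:2602.14597 — 3 statements merged into one kernel-verified Lean document; each statement's English description precedes it below -/
import Mathlib

section
/- Let 𝔊 be a Lie superalgebra over a field k of characteristic ≠ 2 such that the even part 𝔊₀ is a simple Lie algebra. If V₁ and V₂ are 𝔊₀-submodules of the odd part 𝔊₁ with V₁ ∩ V₂ = 0 and [V₁, V₁] ≠ 0, then V₂ is a trivial 𝔊₀-module and [V₂, V₂] = 0. -/
/-!
The odd Jacobi identity for `x, y ∈ V₁`, `w ∈ V₂` expresses `⁅[x, y], w⁆ ∈ V₂` as an element of
`V₁`, so `[V₁, V₁]` acts trivially on `V₂`. The kernel of the action on `V₂` is an ideal of the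
simple algebra `𝔊₀` containing a nonzero element, hence all of `𝔊₀`. Finally, for `x, y ∈ V₂`
equivariance makes `[x, y]` central in `𝔊₀`, and the centre of a simple Lie algebra is zero.
-/

section OddBracket

variable {k L M : Type} [CommRing k] [LieRing L] [LieAlgebra k L]
  [AddCommGroup M] [Module k M] [LieRingModule L M]

lemma lie_oddBracket_eq_zero_of_disjoint (br : M →ₗ[k] M →ₗ[k] L)
    (hjacobi : ∀ x y z : M, ⁅br x y, z⁆ + ⁅br y z, x⁆ + ⁅br z x, y⁆ = 0)
    {N₁ N₂ : LieSubmodule k L M} (hdisj : N₁.toSubmodule ⊓ N₂.toSubmodule = ⊥)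
    {x y w : M} (hx : x ∈ N₁) (hy : y ∈ N₁) (hw : w ∈ N₂) : ⁅br x y, w⁆ = 0 := by
  have hexpr : ⁅br x y, w⁆ = -(⁅br y w, x⁆ + ⁅br w x, y⁆) :=
    eq_neg_of_add_eq_zero_right (hjacobi y w x)
  have hmem₁ : ⁅br x y, w⁆ ∈ N₁ := by
    rw [hexpr]
    exact neg_mem (add_mem (N₁.lie_mem hx) (N₁.lie_mem hy))
  have hmem : ⁅br x y, w⁆ ∈ N₁.toSubmodule ⊓ N₂.toSubmodule := ⟨hmem₁, N₂.lie_mem hw⟩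
  rwa [hdisj, Submodule.mem_bot] at hmem

lemma LieAlgebra.IsSimple.oddBracket_eq_zero_of_lie_eq_zero [LieAlgebra.IsSimple k L]
    (br : M →ₗ[k] M →ₗ[k] L)
    (hequiv : ∀ (g : L) (x y : M), ⁅g, br x y⁆ = br ⁅g, x⁆ y + br x ⁅g, y⁆)
    {x y : M} (hx : ∀ g : L, ⁅g, x⁆ = 0) (hy : ∀ g : L, ⁅g, y⁆ = 0) : br x y = 0 := by
  have hcentral : br x y ∈ LieAlgebra.center k L := fun g ↦ by
    rw [hequiv, hx, hy, map_zero, LinearMap.zero_apply, map_zero, add_zero]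
  rwa [LieAlgebra.center_eq_bot, LieSubmodule.mem_bot] at hcentral

end OddBracket

lemma LieAlgebra.IsSimple.lie_eq_zero_of_lie_eq_zero {k L M : Type} [CommRing k] [LieRing L]
    [LieAlgebra k L] [LieAlgebra.IsSimple k L] [AddCommGroup M] [Module k M] [LieRingModule L M]
    [LieModule k L M] {a : L} (ha : a ≠ 0) (h : ∀ m : M, ⁅a, m⁆ = 0) (g : L) (m : M) :
    ⁅g, m⁆ = 0 := by
  have hker : LieModule.ker k L M = ⊤ :=
    (LieAlgebra.IsSimple.eq_bot_or_eq_top _).resolve_left fun hbot ↦ ha <| by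
      rw [← LieSubmodule.mem_bot (R := k) (L := L), ← hbot, LieModule.mem_ker]
      exact h
  exact (LieModule.mem_ker k L M g).mp (hker ▸ LieSubmodule.mem_top g) m

theorem stmt0_general {k L M : Type} [Field k]
    [LieRing L] [LieAlgebra k L]
    [AddCommGroup M] [Module k M] [LieRingModule L M] [LieModule k L M]
    (hsimple : LieAlgebra.IsSimple k L)
    (br : M →ₗ[k] M →ₗ[k] L)
    (hequiv : ∀ (g : L) (x y : M), ⁅g, br x y⁆ = br ⁅g, x⁆ y + br x ⁅g, y⁆)
    (hjacobi : ∀ x y z : M, ⁅br x y, z⁆ + ⁅br y z, x⁆ + ⁅br z x, y⁆ = 0)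
    (V₁ V₂ : Submodule k M)
    (hV₁ : ∀ (g : L), ∀ x ∈ V₁, ⁅g, x⁆ ∈ V₁)
    (hV₂ : ∀ (g : L), ∀ x ∈ V₂, ⁅g, x⁆ ∈ V₂)
    (hdisj : V₁ ⊓ V₂ = ⊥)
    (hnonzero : ∃ x ∈ V₁, ∃ y ∈ V₁, br x y ≠ 0) :
    (∀ (g : L), ∀ x ∈ V₂, ⁅g, x⁆ = 0) ∧ ∀ x ∈ V₂, ∀ y ∈ V₂, br x y = 0 := by
  let N₁ : LieSubmodule k L M := { V₁ with lie_mem := hV₁ _ _ }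
  let N₂ : LieSubmodule k L M := { V₂ with lie_mem := hV₂ _ _ }
  obtain ⟨x, hx, y, hy, hxy⟩ := hnonzero
  have htrivial : ∀ (g : L), ∀ w ∈ V₂, ⁅g, w⁆ = 0 := fun g w hw ↦ by
    have hker : ∀ v : N₂, ⁅br x y, v⁆ = 0 := fun v ↦
      Subtype.ext (lie_oddBracket_eq_zero_of_disjoint (N₁ := N₁) br hjacobi hdisj hx hy v.2)
    exact congrArg Subtype.val (hsimple.lie_eq_zero_of_lie_eq_zero hxy hker g ⟨w, hw⟩)
  exact ⟨htrivial, fun x hx y hy ↦ hsimple.oddBracket_eq_zero_of_lie_eq_zero br hequiv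
    (htrivial · x hx) (htrivial · y hy)⟩

/-- Let 𝔊 be a Lie superalgebra over a field k of characteristic ≠ 2 such that
the even part 𝔊₀ is a simple Lie algebra (here `L`), with odd part `M`, the odd bracket being
the symmetric bilinear `G`-equivariant map `br : M → M → L` satisfying the super-Jacobi identity.
If `V₁` and `V₂` are `L`-submodules of `M` with `V₁ ⊓ V₂ = ⊥` and `[V₁, V₁] ≠ 0`, then `V₂` is
a trivial `L`-module and `[V₂, V₂] = 0`. -/
theorem stmt0 {k L M : Type} [Field k] (hchar : ringChar k ≠ 2)
    [LieRing L] [LieAlgebra k L]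
    [AddCommGroup M] [Module k M] [LieRingModule L M] [LieModule k L M]
    (hsimple : LieAlgebra.IsSimple k L)
    (br : M →ₗ[k] M →ₗ[k] L)
    (hsymm : ∀ x y : M, br x y = br y x)
    (hequiv : ∀ (g : L) (x y : M), ⁅g, br x y⁆ = br ⁅g, x⁆ y + br x ⁅g, y⁆)
    (hjacobi : ∀ x y z : M, ⁅br x y, z⁆ + ⁅br y z, x⁆ + ⁅br z x, y⁆ = 0)
    (V₁ V₂ : Submodule k M)
    (hV₁ : ∀ (g : L), ∀ x ∈ V₁, ⁅g, x⁆ ∈ V₁)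
    (hV₂ : ∀ (g : L), ∀ x ∈ V₂, ⁅g, x⁆ ∈ V₂)
    (hdisj : V₁ ⊓ V₂ = ⊥)
    (hnonzero : ∃ x ∈ V₁, ∃ y ∈ V₁, br x y ≠ 0) :
    (∀ (g : L), ∀ x ∈ V₂, ⁅g, x⁆ = 0) ∧ ∀ x ∈ V₂, ∀ y ∈ V₂, br x y = 0 :=
  stmt0_general hsimple br hequiv hjacobi V₁ V₂ hV₁ hV₂ hdisj hnonzero
end

section
/- Let 𝔊 be a Lie superalgebra over a field k of characteristic ≠ 2 such that the even part 𝔊₀ is a simple Lie algebra. If V₁ and V₂ are 𝔊₀-submodules of the odd part 𝔊₁ such that [V₁, V₂] = 0 and [V₁, V₁] ≠ 0, then V₂ is a trivial 𝔊₀-module. -/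
/-! The brackets `br x y` with `x, y ∈ V₁` span an ideal of `L`, because the pairing is
`L`-equivariant and `V₁` is `L`-stable; it is nonzero, so by simplicity it is all of `L`.
For `v ∈ V₂` the Jacobi identity gives `⁅br x y, v⁆ = -⁅br y v, x⁆ - ⁅br v x, y⁆ = 0`,
since both `br y v` and `br v x = br x v` vanish. -/

section SuperPairing

variable {k L M N : Type} [CommRing k] [LieRing L] [LieAlgebra k L]
  [AddCommGroup M] [Module k M] [LieRingModule L M]
  [AddCommGroup N] [Module k N] [LieRingModule L N]

/-- The ideal `[V, W]` of `L`. -/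
def bracketIdeal (br : M →ₗ[k] N →ₗ[k] L)
    (hequiv : ∀ (g : L) (x : M) (y : N), ⁅g, br x y⁆ = br ⁅g, x⁆ y + br x ⁅g, y⁆)
    (V : Submodule k M) (W : Submodule k N)
    (hV : ∀ (g : L), ∀ x ∈ V, ⁅g, x⁆ ∈ V) (hW : ∀ (g : L), ∀ y ∈ W, ⁅g, y⁆ ∈ W) :
    LieIdeal k L :=
  { Submodule.map₂ br V W with
    lie_mem := fun {g} {_} hz => by
      have hle : Submodule.map₂ br V W ≤
          (Submodule.map₂ br V W).comap (LieModule.toEnd k L L g : L →ₗ[k] L) :=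
        Submodule.map₂_le.mpr fun x hx y hy => by
          simpa [hequiv] using add_mem (Submodule.apply_mem_map₂ br (hV g x hx) hy)
            (Submodule.apply_mem_map₂ br hx (hW g y hy))
      simpa using hle hz }

theorem bracketIdeal_eq_top {br : M →ₗ[k] N →ₗ[k] L}
    {hequiv : ∀ (g : L) (x : M) (y : N), ⁅g, br x y⁆ = br ⁅g, x⁆ y + br x ⁅g, y⁆}
    {V : Submodule k M} {W : Submodule k N}
    {hV : ∀ (g : L), ∀ x ∈ V, ⁅g, x⁆ ∈ V} {hW : ∀ (g : L), ∀ y ∈ W, ⁅g, y⁆ ∈ W}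
    (hsimple : LieAlgebra.IsSimple k L) (hne : ∃ x ∈ V, ∃ y ∈ W, br x y ≠ 0) :
    bracketIdeal br hequiv V W hV hW = ⊤ := by
  refine (hsimple.eq_bot_or_eq_top _).resolve_left fun hbot => ?_
  obtain ⟨x, hx, y, hy, hxy⟩ := hne
  have hmem : br x y ∈ bracketIdeal br hequiv V W hV hW := Submodule.apply_mem_map₂ br hx hy
  rw [hbot, LieSubmodule.mem_bot] at hmem
  exact hxy hmem

end SuperPairing

section SymmetricSuperPairing

variable {k L M : Type} [CommRing k] [LieRing L] [LieAlgebra k L]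
  [AddCommGroup M] [Module k M] [LieRingModule L M]
  {br : M →ₗ[k] M →ₗ[k] L} {V₁ V₂ : Submodule k M}

theorem lie_apply_eq_zero_of_orthogonal (hsymm : ∀ x y : M, br x y = br y x)
    (hjacobi : ∀ x y z : M, ⁅br x y, z⁆ + ⁅br y z, x⁆ + ⁅br z x, y⁆ = 0)
    (horth : ∀ x ∈ V₁, ∀ y ∈ V₂, br x y = 0)
    {x y v : M} (hx : x ∈ V₁) (hy : y ∈ V₁) (hv : v ∈ V₂) :
    ⁅br x y, v⁆ = 0 := by
  have hyv : br y v = 0 := horth y hy v hv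
  have hvx : br v x = 0 := hsymm v x ▸ horth x hx v hv
  simpa [hyv, hvx] using hjacobi x y v

theorem lie_eq_zero_of_mem_map₂ [LieModule k L M] (hsymm : ∀ x y : M, br x y = br y x)
    (hjacobi : ∀ x y z : M, ⁅br x y, z⁆ + ⁅br y z, x⁆ + ⁅br z x, y⁆ = 0)
    (horth : ∀ x ∈ V₁, ∀ y ∈ V₂, br x y = 0)
    {g : L} (hg : g ∈ Submodule.map₂ br V₁ V₁) {v : M} (hv : v ∈ V₂) :
    ⁅g, v⁆ = 0 := by
  have hle : Submodule.map₂ br V₁ V₁ ≤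
      LinearMap.ker ((LieModule.toEnd k L M : L →ₗ[k] M →ₗ[k] M).flip v) :=
    Submodule.map₂_le.mpr fun x hx y hy => by
      simpa using lie_apply_eq_zero_of_orthogonal hsymm hjacobi horth hx hy hv
  simpa using hle hg

end SymmetricSuperPairing

theorem stmt1_general {k L M : Type} [Field k]
    [LieRing L] [LieAlgebra k L]
    [AddCommGroup M] [Module k M] [LieRingModule L M] [LieModule k L M]
    (hsimple : LieAlgebra.IsSimple k L)
    (br : M →ₗ[k] M →ₗ[k] L)
    (hsymm : ∀ x y : M, br x y = br y x)
    (hequiv : ∀ (g : L) (x y : M), ⁅g, br x y⁆ = br ⁅g, x⁆ y + br x ⁅g, y⁆)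
    (hjacobi : ∀ x y z : M, ⁅br x y, z⁆ + ⁅br y z, x⁆ + ⁅br z x, y⁆ = 0)
    (V₁ V₂ : Submodule k M)
    (hV₁ : ∀ (g : L), ∀ x ∈ V₁, ⁅g, x⁆ ∈ V₁)
    (horth : ∀ x ∈ V₁, ∀ y ∈ V₂, br x y = 0)
    (hnonzero : ∃ x ∈ V₁, ∃ y ∈ V₁, br x y ≠ 0) :
    ∀ (g : L), ∀ x ∈ V₂, ⁅g, x⁆ = 0 := by
  intro g v hv
  have htop : bracketIdeal br hequiv V₁ V₁ hV₁ hV₁ = ⊤ := bracketIdeal_eq_top hsimple hnonzero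
  have hg : g ∈ Submodule.map₂ br V₁ V₁ := by
    change g ∈ bracketIdeal br hequiv V₁ V₁ hV₁ hV₁
    simp [htop]
  exact lie_eq_zero_of_mem_map₂ hsymm hjacobi horth hg hv

/-- Let 𝔊 be a Lie superalgebra over a field k of characteristic ≠ 2 such that the
even part 𝔊₀ is a simple Lie algebra. If `V₁`, `V₂` are submodules of the odd part with
`[V₁, V₂] = 0` and `[V₁, V₁] ≠ 0`, then `V₂` is a trivial module. -/
theorem stmt1 {k L M : Type} [Field k] (hchar : ringChar k ≠ 2)
    [LieRing L] [LieAlgebra k L]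
    [AddCommGroup M] [Module k M] [LieRingModule L M] [LieModule k L M]
    (hsimple : LieAlgebra.IsSimple k L)
    (br : M →ₗ[k] M →ₗ[k] L)
    (hsymm : ∀ x y : M, br x y = br y x)
    (hequiv : ∀ (g : L) (x y : M), ⁅g, br x y⁆ = br ⁅g, x⁆ y + br x ⁅g, y⁆)
    (hjacobi : ∀ x y z : M, ⁅br x y, z⁆ + ⁅br y z, x⁆ + ⁅br z x, y⁆ = 0)
    (V₁ V₂ : Submodule k M)
    (hV₁ : ∀ (g : L), ∀ x ∈ V₁, ⁅g, x⁆ ∈ V₁)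
    (hV₂ : ∀ (g : L), ∀ x ∈ V₂, ⁅g, x⁆ ∈ V₂)
    (horth : ∀ x ∈ V₁, ∀ y ∈ V₂, br x y = 0)
    (hnonzero : ∃ x ∈ V₁, ∃ y ∈ V₁, br x y ≠ 0) :
    ∀ (g : L), ∀ x ∈ V₂, ⁅g, x⁆ = 0 :=
  stmt1_general hsimple br hsymm hequiv hjacobi V₁ V₂ hV₁ horth hnonzero
end

section
/- Let k be an algebraically closed field of characteristic p > 2, G = SL₂, and let m, n be nonnegative integers with m = n + 2 and p | m. Then Hom_G(L(m) ⊗ L(n), 𝔰𝔩₂) = 0. -/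
/-!
Let `v ∈ V` and `w ∈ W` be highest weight vectors (weights `n + 2` and `n`) and `w' = σ(s) w`, with
`s` the Weyl element, the lowest weight vector of `W`. Torus weights force `φ v w = 0` and
`φ v w' = c • E`, and the big cell `U T U⁻ ⊂ SL₂` then pins down every matrix coefficient
`φ (g v) (h w')` in terms of the single scalar `c`.
The `x ^ (n + 1)`-coefficient `v'` of `x ↦ u⁻(x) v` (the image of the weight `-n` vector
`f⁽ⁿ⁺¹⁾ v` of the Weyl module) has an orbit on which `(φ (·) w')₀₁` vanishes, since the
relevant coefficient is `(n + 2) g₀₀ g₀₁ⁿ⁺¹ c` and `p ∣ n + 2`; yet `(φ v' (u(-1) w'))₀₀ = -c`.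
By simplicity of `V`, either `v' = 0` or its orbit spans `V` and contains `v`; both give `c = 0`,
after which `φ` vanishes on the product of two spanning orbits.
-/

open Matrix

/-- The diagonal torus element diag(t, t⁻¹) of SL₂. -/
def sl2diag {k : Type} [Field k] (t : kˣ) : Matrix.SpecialLinearGroup (Fin 2) k :=
  ⟨!![(t : k), 0; 0, ((t⁻¹ : kˣ) : k)], by
    simp [Matrix.det_fin_two_of, ← Units.val_mul]⟩

/-- The upper unipotent element of SL₂. -/
def sl2unip {k : Type} [Field k] (s : k) : Matrix.SpecialLinearGroup (Fin 2) k :=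
  ⟨!![1, s; 0, 1], by simp [Matrix.det_fin_two_of]⟩

/-- A representation of SL₂ is irreducible of highest weight n. -/
def IsSimpleHW {k V : Type} [Field k] [AddCommGroup V] [Module k V]
    (ρ : Representation k (Matrix.SpecialLinearGroup (Fin 2) k) V) (n : ℕ) : Prop :=
  Nontrivial V ∧
  (∀ p : Submodule k V, (∀ g, ∀ x ∈ p, ρ g x ∈ p) → p = ⊥ ∨ p = ⊤) ∧
  ∃ v : V, v ≠ 0 ∧ (∀ s : k, ρ (sl2unip s) v = v) ∧
    ∀ t : kˣ, ρ (sl2diag t) v = ((t : k) ^ n) • v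

open Polynomial
open scoped MatrixGroups

section SL2

variable {k : Type} [Field k]

def sl2low (s : k) : SL(2, k) :=
  ⟨!![1, 0; s, 1], by simp [det_fin_two_of]⟩

def sl2weyl : SL(2, k) :=
  ⟨!![0, 1; -1, 0], by simp [det_fin_two_of]⟩

@[simp] lemma coe_sl2diag (t : kˣ) :
    (sl2diag t : Matrix (Fin 2) (Fin 2) k) = !![(t : k), 0; 0, (t : k)⁻¹] := by
  simp [sl2diag]

@[simp] lemma coe_sl2unip (s : k) : (sl2unip s : Matrix (Fin 2) (Fin 2) k) = !![1, s; 0, 1] :=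
  rfl

@[simp] lemma coe_sl2low (s : k) : (sl2low s : Matrix (Fin 2) (Fin 2) k) = !![1, 0; s, 1] :=
  rfl

@[simp] lemma coe_sl2weyl : ((sl2weyl : SL(2, k)) : Matrix (Fin 2) (Fin 2) k) = !![0, 1; -1, 0] :=
  rfl

lemma sl2low_mul_sl2weyl (s : k) : sl2low s * sl2weyl = sl2weyl * sl2unip (-s) := by
  ext i j
  fin_cases i <;> fin_cases j <;> simp

lemma sl2diag_mul_sl2weyl (t : kˣ) : sl2diag t * sl2weyl = sl2weyl * sl2diag t⁻¹ := by
  ext i j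
  fin_cases i <;> fin_cases j <;> simp

lemma sl2weyl_mul_sl2weyl : (sl2weyl : SL(2, k)) * sl2weyl = sl2diag (-1) := by
  ext i j
  fin_cases i <;> fin_cases j <;> simp

lemma Matrix.SpecialLinearGroup.det_fin_two_eq_one (N : SL(2, k)) :
    N 0 0 * N 1 1 - N 0 1 * N 1 0 = 1 := by
  rw [← det_fin_two]
  exact N.det_coe

lemma exists_eq_sl2unip_mul_sl2diag_mul_sl2low (N : SL(2, k)) (h : N 1 1 ≠ 0) :
    ∃ x y : k, ∃ d : kˣ, (d : k)⁻¹ = N 1 1 ∧ N = sl2unip x * sl2diag d * sl2low y := by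
  refine ⟨N 0 1 / N 1 1, N 1 0 / N 1 1, (Units.mk0 (N 1 1) h)⁻¹, by simp, ?_⟩
  have hdet := N.det_fin_two_eq_one
  ext i j
  fin_cases i <;> fin_cases j <;> simp <;> field_simp
  linear_combination hdet

lemma exists_eq_sl2unip_mul_sl2diag_mul_sl2weyl (N : SL(2, k)) (h : N 1 1 = 0) :
    ∃ x : k, ∃ d : kˣ, N = sl2unip x * sl2diag d * sl2weyl := by
  have hdet := N.det_fin_two_eq_one
  rw [h, mul_zero, zero_sub] at hdet
  have h01 : N 0 1 ≠ 0 := left_ne_zero_of_mul (neg_ne_zero.1 (hdet ▸ one_ne_zero))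
  refine ⟨-(N 0 0 * N 0 1), Units.mk0 (N 0 1) h01, ?_⟩
  ext i j
  fin_cases i <;> fin_cases j <;> simp [h] <;> field_simp
  linear_combination -hdet

end SL2

section Orbit

variable {k G V : Type} [Field k] [Monoid G] [AddCommGroup V] [Module k V]

lemma span_range_orbit_eq_top {ρ : Representation k G V}
    (hρ : ∀ p : Submodule k V, (∀ g, ∀ x ∈ p, ρ g x ∈ p) → p = ⊥ ∨ p = ⊤) {x : V} (hx : x ≠ 0) :
    Submodule.span k (Set.range fun g => ρ g x) = ⊤ := by
  set p := Submodule.span k (Set.range fun g => ρ g x)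
  have hinv : ∀ g, ∀ y ∈ p, ρ g y ∈ p := fun g y hy =>
    (Submodule.span_le (p := p.comap (ρ g)).2 (by
      rintro _ ⟨h, rfl⟩
      exact Submodule.subset_span ⟨g * h, by simp⟩)) hy
  refine (hρ p hinv).resolve_left fun hbot => hx ?_
  rw [← Submodule.mem_bot k, ← hbot]
  exact Submodule.subset_span ⟨1, by simp⟩

end Orbit

lemma exists_units_zpow_ne_one (k : Type) [Field k] [Infinite k] {e : ℤ} (he : e ≠ 0) :
    ∃ t : kˣ, (t : k) ^ e ≠ 1 := by
  classical
  obtain ⟨x, hx⟩ := Infinite.exists_notMem_finset (insert 0 (nthRoots e.natAbs (1 : k)).toFinset)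
  simp only [Finset.mem_insert, Multiset.mem_toFinset, mem_nthRoots (Int.natAbs_pos.2 he),
    not_or] at hx
  refine ⟨Units.mk0 x hx.1, fun h => hx.2 ?_⟩
  have : Units.mk0 x hx.1 ^ e = 1 := Units.ext (by simpa using h)
  simpa using congrArg Units.val (pow_natAbs_eq_one.2 this)

section Weights

variable {k : Type} [Field k]

lemma sl2diag_mul_mul_inv_apply (t : kˣ) (A : Matrix (Fin 2) (Fin 2) k) (i j : Fin 2) :
    ((sl2diag t : Matrix (Fin 2) (Fin 2) k) * A * ((sl2diag t)⁻¹ : SL(2, k))) i j =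
      (t : k) ^ (2 * ((j : ℤ) - i)) * A i j := by
  fin_cases i <;> fin_cases j <;>
    simp [adjugate_fin_two, mul_apply, Fin.sum_univ_two, vecMul, dotProduct] <;> field_simp

variable {V W : Type} [AddCommGroup V] [Module k V] [AddCommGroup W] [Module k W]

def IsAdjointEquivariant (ρ : Representation k SL(2, k) V) (σ : Representation k SL(2, k) W)
    (φ : V →ₗ[k] W →ₗ[k] Matrix (Fin 2) (Fin 2) k) : Prop :=
  ∀ g v w, φ (ρ g v) (σ g w) =
    (g : Matrix (Fin 2) (Fin 2) k) * φ v w * ((g⁻¹ : SL(2, k)) : Matrix (Fin 2) (Fin 2) k)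

variable {ρ : Representation k SL(2, k) V} {σ : Representation k SL(2, k) W}
  {φ : V →ₗ[k] W →ₗ[k] Matrix (Fin 2) (Fin 2) k}

lemma IsAdjointEquivariant.apply_apply_eq_zero_of_weight [Infinite k]
    (hφ : IsAdjointEquivariant ρ σ φ) {v : V} {w : W} {a b : ℤ}
    (hv : ∀ t : kˣ, ρ (sl2diag t) v = (t : k) ^ a • v)
    (hw : ∀ t : kˣ, σ (sl2diag t) w = (t : k) ^ b • w)
    {i j : Fin 2} (hij : a + b ≠ 2 * ((j : ℤ) - i)) : φ v w i j = 0 := by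
  obtain ⟨t, ht⟩ := exists_units_zpow_ne_one k (sub_ne_zero.2 hij)
  have h := congrFun₂ (hφ (sl2diag t) v w) i j
  simp only [hv, hw, map_smul, LinearMap.smul_apply, Matrix.smul_apply, smul_eq_mul,
    sl2diag_mul_mul_inv_apply] at h
  have hne : (t : k) ^ a * (t : k) ^ b - (t : k) ^ (2 * ((j : ℤ) - i)) ≠ 0 := by
    rwa [← zpow_add₀ t.ne_zero, sub_ne_zero, Ne, ← div_eq_one_iff_eq (zpow_ne_zero _ t.ne_zero),
      ← zpow_sub₀ t.ne_zero]
  exact (mul_eq_zero.1 (by linear_combination h : _ * φ v w i j = 0)).resolve_left hne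

lemma sl2diag_apply_sl2weyl_apply {w : W} {b : ℤ}
    (hw : ∀ t : kˣ, σ (sl2diag t) w = (t : k) ^ b • w) (t : kˣ) :
    σ (sl2diag t) (σ sl2weyl w) = (t : k) ^ (-b) • σ sl2weyl w := by
  rw [← Module.End.mul_apply, ← map_mul, sl2diag_mul_sl2weyl, map_mul, Module.End.mul_apply, hw,
    map_smul]
  simp [_root_.zpow_neg]

lemma sl2low_apply_sl2weyl_apply {w : W} (hw : ∀ s : k, σ (sl2unip s) w = w) (s : k) :
    σ (sl2low s) (σ sl2weyl w) = σ sl2weyl w := by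
  rw [← Module.End.mul_apply, ← map_mul, sl2low_mul_sl2weyl, map_mul, Module.End.mul_apply, hw]

lemma sl2weyl_apply_sl2weyl_apply {w : W} {b : ℤ}
    (hw : ∀ t : kˣ, σ (sl2diag t) w = (t : k) ^ b • w) :
    σ sl2weyl (σ sl2weyl w) = (-1 : k) ^ b • w := by
  rw [← Module.End.mul_apply, ← map_mul, sl2weyl_mul_sl2weyl, hw]
  simp

end Weights

section MatrixCoefficients

variable {k V W : Type} [Field k] [AddCommGroup V] [Module k V] [AddCommGroup W] [Module k W]
  {ρ : Representation k SL(2, k) V} {σ : Representation k SL(2, k) W}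
  {φ : V →ₗ[k] W →ₗ[k] Matrix (Fin 2) (Fin 2) k}

lemma IsAdjointEquivariant.apply_sl2unip_apply (hφ : IsAdjointEquivariant ρ σ φ) {v : V}
    (hv : ∀ s : k, ρ (sl2unip s) v = v) (s : k) (w : W) :
    φ v (σ (sl2unip s) w) = !![1, s; 0, 1] * φ v w * !![1, -s; 0, 1] := by
  rw [← hv s, hφ, hv]
  simp [adjugate_fin_two]

lemma IsAdjointEquivariant.apply_sl2weyl_orbit (hφ : IsAdjointEquivariant ρ σ φ) {v : V} {w : W}
    {n : ℕ} {c : k} (hv : ∀ s : k, ρ (sl2unip s) v = v) (hw : ∀ s : k, σ (sl2unip s) w = w)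
    (hwt : ∀ t : kˣ, σ (sl2diag t) w = (t : k) ^ n • w) (hn : n ≠ 0)
    (h0 : φ v w = 0) (h1 : φ v (σ sl2weyl w) = c • !![0, 1; 0, 0]) (N : SL(2, k)) :
    φ v (σ N (σ sl2weyl w)) = (N 1 1 ^ n * c) • !![0, 1; 0, 0] := by
  have hwt' : ∀ t : kˣ, σ (sl2diag t) w = (t : k) ^ (n : ℤ) • w := by simpa using hwt
  by_cases hN : N 1 1 = 0
  · obtain ⟨x, d, hNeq⟩ := exists_eq_sl2unip_mul_sl2diag_mul_sl2weyl N hN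
    rw [hN, zero_pow hn, zero_mul, zero_smul, hNeq]
    simp only [map_mul, Module.End.mul_apply, sl2weyl_apply_sl2weyl_apply hwt', hwt, map_smul,
      hφ.apply_sl2unip_apply hv, h0]
    simp
  · obtain ⟨x, y, d, hd, hNeq⟩ := exists_eq_sl2unip_mul_sl2diag_mul_sl2low N hN
    rw [← hd, hNeq]
    simp only [map_mul, Module.End.mul_apply, sl2low_apply_sl2weyl_apply hw,
      sl2diag_apply_sl2weyl_apply hwt', map_smul, hφ.apply_sl2unip_apply hv, h1]
    ext i j
    fin_cases i <;> fin_cases j <;> simp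

/-- `((g⁻¹ * h) 1 1) ^ n • (g * E * g⁻¹)` with `E = !![0, 1; 0, 0]`, written out in entries. -/
def sl2MatrixCoeff (n : ℕ) (g h : SL(2, k)) : Matrix (Fin 2) (Fin 2) k :=
  (g 0 0 * h 1 1 - g 1 0 * h 0 1) ^ n •
    !![-(g 0 0 * g 1 0), g 0 0 ^ 2; -(g 1 0 ^ 2), g 0 0 * g 1 0]

lemma IsAdjointEquivariant.apply_orbit_apply_orbit (hφ : IsAdjointEquivariant ρ σ φ)
    {v : V} {w : W} {n : ℕ} {c : k} (hv : ∀ s : k, ρ (sl2unip s) v = v)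
    (hw : ∀ s : k, σ (sl2unip s) w = w)
    (hwt : ∀ t : kˣ, σ (sl2diag t) w = (t : k) ^ n • w) (hn : n ≠ 0)
    (h0 : φ v w = 0) (h1 : φ v (σ sl2weyl w) = c • !![0, 1; 0, 0]) (g h : SL(2, k)) :
    φ (ρ g v) (σ h (σ sl2weyl w)) = c • sl2MatrixCoeff n g h := by
  have := hφ g v (σ (g⁻¹ * h) (σ sl2weyl w))
  rw [← Module.End.mul_apply, ← map_mul, mul_inv_cancel_left,
    hφ.apply_sl2weyl_orbit hv hw hwt hn h0 h1] at this
  rw [this]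
  ext i j
  fin_cases i <;> fin_cases j <;>
    simp [sl2MatrixCoeff, adjugate_fin_two, mul_apply, Fin.sum_univ_two] <;> ring

end MatrixCoefficients

lemma exists_sum_mul_eval_eq_coeff (k : Type) [Field k] [Infinite k] (M d : ℕ) :
    ∃ (s : Finset k) (e : k → k),
      ∀ P : k[X], P.natDegree ≤ M → ∑ x ∈ s, e x * P.eval x = P.coeff d := by
  classical
  obtain ⟨s, hs⟩ := Infinite.exists_subset_card_eq k (M + 1)
  refine ⟨s, fun x => (Lagrange.basis s id x).coeff d, fun P hP => ?_⟩
  have hdeg : P.degree < s.card :=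
    degree_le_natDegree.trans_lt (by rw [hs]; exact_mod_cast Nat.lt_succ_of_le hP)
  conv_rhs => rw [Lagrange.eq_interpolate (Set.injOn_id _) hdeg, Lagrange.interpolate_apply,
    finsetSum_coeff]
  simp [mul_comm]

lemma coeff_linear_pow_succ {k : Type} [Field k] (a b : k) (N : ℕ) :
    ((C b * X + C a) ^ (N + 1)).coeff N = (N + 1) * a * b ^ N := by
  rw [show C b * X + C a = (X + C a).comp (C b * X) by simp, ← pow_comp, comp_C_mul_X_coeff,
    coeff_X_add_C_pow, Nat.add_sub_cancel_left, Nat.choose_succ_self_right]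
  push_cast
  ring

section Modular

variable {k V W : Type} [Field k] [AddCommGroup V] [Module k V] [AddCommGroup W] [Module k W]
  {ρ : Representation k SL(2, k) V} {σ : Representation k SL(2, k) W}
  {φ : V →ₗ[k] W →ₗ[k] Matrix (Fin 2) (Fin 2) k}

lemma eq_zero_of_forall_apply_eq_smul_sl2MatrixCoeff [Infinite k]
    (hρ : ∀ p : Submodule k V, (∀ g, ∀ x ∈ p, ρ g x ∈ p) → p = ⊥ ∨ p = ⊤)
    {v : V} {w : W} {n : ℕ} {c : k} (hn : ((n + 2 : ℕ) : k) = 0)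
    (hF : ∀ g h, φ (ρ g v) (σ h w) = c • sl2MatrixCoeff n g h) : c = 0 := by
  obtain ⟨s, e, he⟩ := exists_sum_mul_eval_eq_coeff k (n + 2) (n + 1)
  -- `v'` is the coefficient of `x ^ (n + 1)` in `x ↦ ρ (sl2low x) v`.
  set v' := ∑ x ∈ s, e x • ρ (sl2low x) v
  have hv'_apply : ∀ (g h : SL(2, k)) (i j : Fin 2),
      φ (ρ g v') (σ h w) i j = ∑ x ∈ s, e x * (c * sl2MatrixCoeff n (g * sl2low x) h i j) := by
    intro g h i j
    have : ρ g v' = ∑ x ∈ s, e x • ρ (g * sl2low x) v := by simp [v', map_sum]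
    rw [this, map_sum, LinearMap.sum_apply, Matrix.sum_apply]
    refine Finset.sum_congr rfl fun x _ => ?_
    rw [map_smul, LinearMap.smul_apply, hF, Matrix.smul_apply, Matrix.smul_apply, smul_eq_mul,
      smul_eq_mul]
  have horbit : ∀ g : SL(2, k), φ (ρ g v') w 0 1 = 0 := by
    intro g
    have hP : ((C (g 0 1) * X + C (g 0 0)) ^ (n + 2) * C c).natDegree ≤ n + 2 := by
      compute_degree
    have hn' : (n : k) + 1 + 1 = 0 := by
      push_cast at hn
      linear_combination hn
    calc φ (ρ g v') w 0 1
        = ∑ x ∈ s, e x * (c * sl2MatrixCoeff n (g * sl2low x) 1 0 1) := by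
          simpa using hv'_apply g 1 0 1
      _ = ∑ x ∈ s, e x * ((C (g 0 1) * X + C (g 0 0)) ^ (n + 2) * C c).eval x := by
        refine Finset.sum_congr rfl fun x _ => congrArg (e x * ·) ?_
        simp [sl2MatrixCoeff, mul_apply, Fin.sum_univ_two]
        ring
      _ = 0 := by
        rw [he _ hP, coeff_mul_C, coeff_linear_pow_succ]
        simp [hn']
  have hself : φ v' (σ (sl2unip (-1)) w) 0 0 = -c := by
    have hQ : (-(C c * (X * (X + 1) ^ n))).natDegree ≤ n + 2 := by
      compute_degree
      omega
    calc φ v' (σ (sl2unip (-1)) w) 0 0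
        = ∑ x ∈ s, e x * (c * sl2MatrixCoeff n (1 * sl2low x) (sl2unip (-1)) 0 0) := by
          simpa using hv'_apply 1 (sl2unip (-1)) 0 0
      _ = ∑ x ∈ s, e x * (-(C c * (X * (X + 1) ^ n))).eval x := by
        refine Finset.sum_congr rfl fun x _ => congrArg (e x * ·) ?_
        simp only [sl2MatrixCoeff, eval_neg, eval_mul, eval_C, eval_X, eval_pow, eval_add, eval_one,
          one_mul, coe_sl2low, coe_sl2unip, Matrix.smul_apply, of_apply, cons_val', cons_val_zero,
          cons_val_one, empty_val', cons_val_fin_one, smul_eq_mul]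
        ring
      _ = -c := by
        rw [he _ hQ]
        simp [coeff_X_add_one_pow]
  by_cases h0 : v' = 0
  · simpa [h0] using hself
  · have hzero := LinearMap.ext_on_range (span_range_orbit_eq_top hρ h0)
      (f := entryLinearMap k k 0 1 ∘ₗ φ.flip w) (g := 0) horbit
    have h11 : φ v w = c • sl2MatrixCoeff n 1 1 := by simpa using hF 1 1
    simpa [h11, sl2MatrixCoeff] using LinearMap.congr_fun hzero v

end Modular

theorem stmt9_general {k : Type} [Field k] [IsAlgClosed k] (p : ℕ) [CharP k p]
    (hp2 : 2 < p) (m n : ℕ) (hm : m = n + 2) (hpm : p ∣ m)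
    {V W : Type} [AddCommGroup V] [Module k V] [AddCommGroup W] [Module k W]
    (ρ : Representation k (Matrix.SpecialLinearGroup (Fin 2) k) V)
    (σ : Representation k (Matrix.SpecialLinearGroup (Fin 2) k) W)
    (hV : IsSimpleHW ρ m) (hW : IsSimpleHW σ n)
    (φ : V →ₗ[k] W →ₗ[k] Matrix (Fin 2) (Fin 2) k)
    (hequiv : ∀ (g : Matrix.SpecialLinearGroup (Fin 2) k) (v : V) (w : W),
      φ (ρ g v) (σ g w) =
        (g : Matrix (Fin 2) (Fin 2) k) * (φ v w) *
          ((g⁻¹ : Matrix.SpecialLinearGroup (Fin 2) k) : Matrix (Fin 2) (Fin 2) k)) :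
    φ = 0 := by
  obtain ⟨-, hVirr, v, hv, hvu, hvt⟩ := hV
  obtain ⟨-, hWirr, w, hw, hwu, hwt⟩ := hW
  subst hm
  have hφ : IsAdjointEquivariant ρ σ φ := hequiv
  have hn : n ≠ 0 := by have := Nat.le_of_dvd (by omega) hpm; omega
  have hvt' : ∀ t : kˣ, ρ (sl2diag t) v = (t : k) ^ ((n + 2 : ℕ) : ℤ) • v := fun t => by
    rw [zpow_natCast, hvt]
  have hwt' : ∀ t : kˣ, σ (sl2diag t) w = (t : k) ^ (n : ℤ) • w := fun t => by
    rw [zpow_natCast, hwt]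
  have h0 : φ v w = 0 := by
    ext i j
    refine hφ.apply_apply_eq_zero_of_weight hvt' hwt' ?_
    fin_cases i <;> fin_cases j <;> simp <;> omega
  have h1 : φ v (σ sl2weyl w) = φ v (σ sl2weyl w) 0 1 • !![0, 1; 0, 0] := by
    ext i j
    fin_cases i <;> fin_cases j <;> simp <;>
      exact hφ.apply_apply_eq_zero_of_weight hvt' (sl2diag_apply_sl2weyl_apply hwt') (by simp)
  have hF := hφ.apply_orbit_apply_orbit hvu hwu hwt hn h0 h1
  have hc := eq_zero_of_forall_apply_eq_smul_sl2MatrixCoeff hVirr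
    ((CharP.cast_eq_zero_iff k p _).2 hpm) hF
  have hw' : σ sl2weyl w ≠ 0 := fun hw'0 => hw <| by
    simpa [hw'0, eq_comm (a := (0 : W))] using sl2weyl_apply_sl2weyl_apply hwt'
  exact LinearMap.ext_on_range (span_range_orbit_eq_top hVirr hv) fun g =>
    LinearMap.ext_on_range (span_range_orbit_eq_top hWirr hw') fun h => by simp [hF, hc]

/-- over an algebraically closed field of characteristic p > 2, if m = n + 2 and
p ∣ m, then Hom_{SL₂}(L(m) ⊗ L(n), 𝔰𝔩₂) = 0: every SL₂-equivariant bilinear map from simple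
modules of highest weights m = n + 2 and n into the traceless 2×2 matrices (adjoint action)
vanishes. -/
theorem stmt9 {k : Type} [Field k] [IsAlgClosed k] (p : ℕ) [Fact p.Prime] [CharP k p]
    (hp2 : 2 < p) (m n : ℕ) (hm : m = n + 2) (hpm : p ∣ m)
    {V W : Type} [AddCommGroup V] [Module k V] [AddCommGroup W] [Module k W]
    [FiniteDimensional k V] [FiniteDimensional k W]
    (ρ : Representation k (Matrix.SpecialLinearGroup (Fin 2) k) V)
    (σ : Representation k (Matrix.SpecialLinearGroup (Fin 2) k) W)
    (hV : IsSimpleHW ρ m) (hW : IsSimpleHW σ n)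
    (φ : V →ₗ[k] W →ₗ[k] Matrix (Fin 2) (Fin 2) k)
    (htr : ∀ (v : V) (w : W), (φ v w).trace = 0)
    (hequiv : ∀ (g : Matrix.SpecialLinearGroup (Fin 2) k) (v : V) (w : W),
      φ (ρ g v) (σ g w) =
        (g : Matrix (Fin 2) (Fin 2) k) * (φ v w) *
          ((g⁻¹ : Matrix.SpecialLinearGroup (Fin 2) k) : Matrix (Fin 2) (Fin 2) k)) :
    φ = 0 :=
  stmt9_general p hp2 m n hm hpm ρ σ hV hW φ hequiv
end
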